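/- arXiv:2512.03669 — 4 statements merged into one kernel-verified Lean document; each statement's English description precedes it below -/
import Mathlib

section
/- For every natural number N ≥ 1, all messages m₁, m₂ ∈ ℕ, and all elements r₁, r₂ of ZMod (N^2), the Paillier ciphertexts satisfy Enc(m₁, r₁) · Enc(m₂, r₂) = Enc((m₁ + m₂) mod N, r₁ · r₂), i.e. ((1+N)^{m₁} · r₁^N) · ((1+N)^{m₂} · r₂^N) = (1+N)^{(m₁+m₂) mod N} · (r₁·r₂)^N in ZMod (N^2). -/
lemma one_add_sq_zero_pow {R : Type*} [CommRing R] (x : R) (hx : x ^ 2 = 0) (n : ℕ) :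
    (1 + x) ^ n = 1 + n * x := by
  induction n with
  | zero => simp
  | succ k ih =>
      rw [pow_succ, ih]
      push_cast
      ring_nf
      rw [hx]
      ring

lemma paillier_pow_N (N : ℕ) :
    ((1 : ZMod (N ^ 2)) + (N : ZMod (N ^ 2))) ^ N = 1 := by
  have hsq : ((N : ZMod (N ^ 2))) ^ 2 = 0 := by
    rw [← Nat.cast_pow, ZMod.natCast_self]
  rw [one_add_sq_zero_pow _ hsq, ← Nat.cast_mul, ← sq,
    ZMod.natCast_self, add_zero]

/-- Additive homomorphic property of Paillier encryption:
`Enc(m₁, r₁) · Enc(m₂, r₂) = Enc((m₁ + m₂) mod N, r₁ · r₂)` in `ZMod (N^2)`. -/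
theorem paillier_add_hom (N : ℕ) (hN : 1 ≤ N) (m₁ m₂ : ℕ) (r₁ r₂ : ZMod (N ^ 2)) :
    (((1 : ZMod (N ^ 2)) + (N : ZMod (N ^ 2))) ^ m₁ * r₁ ^ N)
      * (((1 : ZMod (N ^ 2)) + (N : ZMod (N ^ 2))) ^ m₂ * r₂ ^ N)
    = ((1 : ZMod (N ^ 2)) + (N : ZMod (N ^ 2))) ^ ((m₁ + m₂) % N) * (r₁ * r₂) ^ N := by
  have key : ((1 : ZMod (N ^ 2)) + (N : ZMod (N ^ 2))) ^ (m₁ + m₂)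
      = ((1 : ZMod (N ^ 2)) + (N : ZMod (N ^ 2))) ^ ((m₁ + m₂) % N) := by
    conv_lhs => rw [← Nat.mod_add_div (m₁ + m₂) N]
    rw [pow_add, pow_mul, paillier_pow_N, one_pow, mul_one]
  calc _ = ((1 : ZMod (N ^ 2)) + (N : ZMod (N ^ 2))) ^ (m₁ + m₂) * (r₁ * r₂) ^ N := by
        rw [pow_add, mul_pow]; ring
    _ = _ := by rw [key]
end

section
/- For every natural number N ≥ 1, every message m ∈ ℕ, every element r of ZMod (N^2), and every exponent k ∈ ℕ, the Paillier ciphertext satisfies Enc(m, r)^k = Enc((m · k) mod N, r^k), i.e. ((1+N)^m · r^N)^k = (1+N)^{(m·k) mod N} · (r^k)^N in ZMod (N^2). -/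
lemma one_add_sq_zero {R : Type*} [CommRing R] (x : R) (hx : x * x = 0) (n : ℕ) :
    (1 + x) ^ n = 1 + (n : R) * x := by
  induction n with
  | zero => simp
  | succ n ih =>
    rw [pow_succ, ih]
    push_cast
    have hx2 : x ^ 2 = 0 := by rwa [sq]
    ring_nf
    rw [hx2]
    ring

lemma N_sq_zero (N : ℕ) : ((N : ZMod (N ^ 2)) * N) = 0 := by
  have : ((N : ZMod (N ^ 2)) * N) = ((N ^ 2 : ℕ) : ZMod (N ^ 2)) := by push_cast; ring
  rw [this, ZMod.natCast_self]

lemma mul_N_mod (N a : ℕ) :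
    ((a : ZMod (N ^ 2)) * N) = (((a % N : ℕ) : ZMod (N ^ 2)) * N) := by
  conv_lhs => rw [← Nat.div_add_mod a N]
  push_cast
  linear_combination ((a / N : ℕ) : ZMod (N ^ 2)) * N_sq_zero N

/-- Scalar-multiplication homomorphic property of Paillier encryption:
`Enc(m, r)^k = Enc((m·k) mod N, r^k)` in `ZMod (N^2)`. -/
theorem paillier_scalar_hom (N : ℕ) (hN : 1 ≤ N) (m : ℕ) (r : ZMod (N ^ 2)) (k : ℕ) :
    (((1 : ZMod (N ^ 2)) + (N : ZMod (N ^ 2))) ^ m * r ^ N) ^ k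
    = ((1 : ZMod (N ^ 2)) + (N : ZMod (N ^ 2))) ^ ((m * k) % N) * (r ^ k) ^ N := by
  have hsq := N_sq_zero N
  rw [mul_pow, ← pow_mul, ← pow_mul, one_add_sq_zero _ hsq, one_add_sq_zero _ hsq,
    mul_N_mod N (m * k)]
  ring
end

section
/- For every natural number N, every message m ∈ ℕ, and every unit r of ZMod (N^2), one has ((1+N)^m · r^N)^{φ(N)} = 1 + (m · φ(N)) · N in ZMod (N^2) (with m·φ(N) and N interpreted via the natural cast). -/
lemma paillier_onePlusN_pow (N k : ℕ) :
    ((1 : ZMod (N ^ 2)) + (N : ZMod (N ^ 2))) ^ k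
      = 1 + (k : ZMod (N ^ 2)) * (N : ZMod (N ^ 2)) := by
  have hN2 : ((N : ZMod (N ^ 2)) * (N : ZMod (N ^ 2))) = 0 := by
    have : ((N ^ 2 : ℕ) : ZMod (N ^ 2)) = 0 := ZMod.natCast_self _
    push_cast at this
    rw [← this]; ring
  induction k with
  | zero => simp
  | succ k ih =>
    rw [pow_succ ((1 : ZMod (N ^ 2)) + (N : ZMod (N ^ 2))) k, ih]
    push_cast
    ring_nf
    rw [mul_comm (N : ZMod (N ^ 2)) (N : ZMod (N ^ 2))] at hN2
    rw [show ((N : ZMod (N^2)) ^ 2) = (N : ZMod (N^2)) * N by ring, hN2]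
    ring

lemma paillier_totient_sq (N : ℕ) (hN : 0 < N) :
    Nat.totient (N ^ 2) = N * Nat.totient N := by
  have h := Nat.totient_gcd_mul_totient_mul N N
  rw [Nat.gcd_self] at h
  have hφ : 0 < Nat.totient N := Nat.totient_pos.mpr hN
  have : Nat.totient N * Nat.totient (N * N) = Nat.totient N * (N * Nat.totient N) := by
    rw [h]; ring
  have := Nat.eq_of_mul_eq_mul_left hφ this
  rwa [sq]

/-- Paillier decryption core: raising a ciphertext to the power `φ(N)`
removes the randomness and exposes `m · φ(N) · N`. -/
theorem paillier_decrypt_core (N : ℕ) (m : ℕ) (r : (ZMod (N ^ 2))ˣ) :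
    (((1 : ZMod (N ^ 2)) + (N : ZMod (N ^ 2))) ^ m * (r : ZMod (N ^ 2)) ^ N) ^ Nat.totient N
      = 1 + ((m * Nat.totient N : ℕ) : ZMod (N ^ 2)) * (N : ZMod (N ^ 2)) := by
  rcases Nat.eq_zero_or_pos N with rfl | hN
  · simp
  have hr : (r : ZMod (N ^ 2)) ^ (N * Nat.totient N) = 1 := by
    have := ZMod.pow_totient r
    rw [paillier_totient_sq N hN] at this
    have := congrArg (Units.val) this
    simpa [Units.val_pow_eq_pow_val] using this
  rw [mul_pow, ← pow_mul, ← pow_mul, hr, mul_one, paillier_onePlusN_pow]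
end

section
/- Let p and q be distinct primes, let N = p·q, and assume N is coprime to φ(N). Then for every unit c of the ring ZMod (N^2) there exist a natural number m < N and a unit r of ZMod (N^2) such that c = (1+N)^m · r^N in ZMod (N^2). -/
/-!
By Euler's theorem in `ZMod N`, `c ^ φ(N)` reduces to `1` mod `N`, hence equals `1 + kN = (1 + N) ^ k`
in `ZMod (N ^ 2)`, where `(1 + N) ^ N = 1`. Since `φ(N)` is invertible mod `N`, a Bézout relation
`φ(N) B + N A = 1` gives `c = (c ^ φ(N)) ^ B * (c ^ A) ^ N = (1 + N) ^ (k B) * (c ^ A) ^ N`, and the exponent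
`k B` may be reduced mod `N`.
-/

theorem one_add_pow_of_sq_eq_zero {R : Type*} [CommRing R] {x : R} (hx : x ^ 2 = 0)
    (k : ℕ) : (1 + x) ^ k = 1 + k * x := by
  induction k with
  | zero => simp
  | succ k ih =>
    rw [pow_succ, ih]
    push_cast
    linear_combination (k : R) * hx

theorem exists_eq_pow_mul_pow_of_coprime {G : Type*} [CommGroup G] {a g : G} {n e : ℕ}
    (hn : n ≠ 0) (ha : a ^ n = 1) (hne : n.Coprime e) (hg : g ^ e ∈ Submonoid.powers a) :
    ∃ m < n, ∃ r : G, g = a ^ m * r ^ n := by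
  obtain ⟨k, hk⟩ := Submonoid.mem_powers_iff _ _ |>.mp hg
  have hbezout : (1 : ℤ) = e * n.gcdB e + n * n.gcdA e := by
    rw [add_comm]; exact_mod_cast hne ▸ Nat.gcd_eq_gcd_ab n e
  have hlt : k * n.gcdB e % n < n := Int.emod_lt_of_pos _ (by omega)
  lift k * n.gcdB e % n to ℕ using Int.emod_nonneg _ (by omega) with m hm
  refine ⟨m, by omega, g ^ n.gcdA e, ?_⟩
  calc g = g ^ (e * n.gcdB e + n * n.gcdA e) := by rw [← hbezout, zpow_one]
    _ = (a ^ k) ^ n.gcdB e * (g ^ n.gcdA e) ^ n := by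
      rw [zpow_add, zpow_mul, zpow_mul', zpow_natCast, zpow_natCast, hk]
    _ = a ^ m * (g ^ n.gcdA e) ^ n := by
      rw [← zpow_natCast a k, ← zpow_mul, zpow_eq_zpow_emod' _ ha, ← hm, zpow_natCast]

namespace ZMod

theorem natCast_self_sq_eq_zero (N : ℕ) : (N : ZMod (N ^ 2)) ^ 2 = 0 := by
  exact_mod_cast natCast_self (N ^ 2)

theorem one_add_natCast_pow (N k : ℕ) : (1 + (N : ZMod (N ^ 2))) ^ k = 1 + k * N :=
  one_add_pow_of_sq_eq_zero (natCast_self_sq_eq_zero N) k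

theorem one_add_natCast_pow_self (N : ℕ) : (1 + (N : ZMod (N ^ 2))) ^ N = 1 := by
  rw [one_add_natCast_pow, ← sq, natCast_self_sq_eq_zero, add_zero]

theorem castHom_pow_totient_eq_one {N : ℕ} (c : (ZMod (N ^ 2))ˣ) :
    castHom (dvd_pow_self N two_ne_zero) (ZMod N) (c ^ N.totient : (ZMod (N ^ 2))ˣ) = 1 := by
  rw [Units.val_pow_eq_pow_val, map_pow]
  exact congrArg Units.val
    (pow_totient (Units.map (castHom (dvd_pow_self N two_ne_zero) (ZMod N)).toMonoidHom c))

variable {N : ℕ} [NeZero N]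

theorem exists_eq_one_add_natCast_pow {x : ZMod (N ^ 2)}
    (hx : castHom (dvd_pow_self N two_ne_zero) (ZMod N) x = 1) :
    ∃ k : ℕ, x = (1 + (N : ZMod (N ^ 2))) ^ k := by
  obtain ⟨k, hk⟩ : N ∣ (x - 1).val := by
    rw [← natCast_eq_zero_iff, natCast_val, ← castHom_apply (h := dvd_pow_self N two_ne_zero),
      map_sub, hx, map_one, sub_self]
  refine ⟨k, ?_⟩
  rw [one_add_natCast_pow, ← sub_eq_iff_eq_add', ← natCast_zmod_val (x - 1), hk]
  push_cast
  ring

end ZMod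

theorem paillier_enc_surjective_general
    (N : ℕ) (hco : Nat.Coprime N (Nat.totient N))
    (c : (ZMod (N ^ 2))ˣ) :
    ∃ m : ℕ, m < N ∧ ∃ r : (ZMod (N ^ 2))ˣ,
      (c : ZMod (N ^ 2))
        = ((1 : ZMod (N ^ 2)) + (N : ZMod (N ^ 2))) ^ m * (r : ZMod (N ^ 2)) ^ N := by
  have hN : N ≠ 0 := by
    rintro rfl
    simp at hco
  have : NeZero N := ⟨hN⟩
  let a : (ZMod (N ^ 2))ˣ := Units.ofPowEqOne _ N (ZMod.one_add_natCast_pow_self N) hN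
  obtain ⟨k, hk⟩ := ZMod.exists_eq_one_add_natCast_pow (ZMod.castHom_pow_totient_eq_one c)
  have hpowers : c ^ N.totient ∈ Submonoid.powers a := ⟨k, Units.ext (by simp [a, hk])⟩
  obtain ⟨m, hm, r, hc⟩ :=
    exists_eq_pow_mul_pow_of_coprime hN (Units.pow_ofPowEqOne _ hN) hco hpowers
  exact ⟨m, hm, r, by simpa [a] using congrArg Units.val hc⟩

/-- Surjectivity of Paillier encryption onto the unit group of `ZMod (N^2)`:
every unit is a valid encryption of some message `m ∈ {0, …, N−1}`. -/
theorem paillier_enc_surjective (p q : ℕ) (hp : p.Prime) (hq : q.Prime) (hpq : p ≠ q)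
    (N : ℕ) (hN : N = p * q) (hco : Nat.Coprime N (Nat.totient N))
    (c : (ZMod (N ^ 2))ˣ) :
    ∃ m : ℕ, m < N ∧ ∃ r : (ZMod (N ^ 2))ˣ,
      (c : ZMod (N ^ 2))
        = ((1 : ZMod (N ^ 2)) + (N : ZMod (N ^ 2))) ^ m * (r : ZMod (N ^ 2)) ^ N :=
  paillier_enc_surjective_general N hco c
end
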